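/- arXiv:2212.02314 — 2 statements merged into one kernel-verified Lean document; each statement's English description precedes it below -/
import Mathlib

section
/- (Attacker's optimal strategy, Proposition 1) Let σ be a full-rank density matrix and Π a positive semidefinite Hermitian operator on a finite-dimensional Hilbert space, and let β > 0. Then the unique minimizer over density matrices ρ of the functional Tr(Πρ) + β·S(ρ‖σ) is ρ* = exp(log σ − Π/β) / Tr(exp(log σ − Π/β)). -/
open Matrix ComplexOrder Kronecker
noncomputable section
variable {m n : Type*} [Fintype n] [DecidableEq n] [Fintype m] [DecidableEq m]

/-- Functional calculus for Hermitian matrices via the spectral theorem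
(junk value `0` on non-Hermitian input). -/
def matFun (f : ℝ → ℝ) (A : Matrix n n ℂ) : Matrix n n ℂ :=
  if hA : A.IsHermitian then
    (hA.eigenvectorUnitary : Matrix n n ℂ) *
      Matrix.diagonal (fun i => (f (hA.eigenvalues i) : ℂ)) *
      (star hA.eigenvectorUnitary : Matrix n n ℂ)
  else 0

/-- Matrix logarithm on the support (`Real.log 0 = 0` gives the `0 log 0 = 0` convention). -/
def matLog (A : Matrix n n ℂ) : Matrix n n ℂ := matFun Real.log A

/-- Matrix exponential (of a Hermitian matrix). -/
def matExp (A : Matrix n n ℂ) : Matrix n n ℂ := matFun Real.exp A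

/-- A density matrix: positive semidefinite with trace one. -/
def IsDensity (ρ : Matrix n n ℂ) : Prop := ρ.PosSemidef ∧ ρ.trace = 1

/-- Quantum relative entropy `S(ρ‖σ) = Tr (ρ (log ρ − log σ))`. -/
def qRelEnt (ρ σ : Matrix n n ℂ) : ℂ := (ρ * (matLog ρ - matLog σ)).trace

/-- `k`-fold tensor power of a matrix. -/
def tpow (ρ : Matrix n n ℂ) (k : ℕ) : Matrix (Fin k → n) (Fin k → n) ℂ :=
  Matrix.of fun i j => ∏ t, ρ (i t) (j t)

/-- Trace norm: the sum of singular values. -/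
def traceNorm (A : Matrix n n ℂ) : ℝ :=
  ∑ i, Real.sqrt ((Matrix.posSemidef_conjTranspose_mul_self A).1.eigenvalues i)

/-- Projection onto the strictly positive eigenspace of a Hermitian matrix. -/
def posProj (A : Matrix n n ℂ) : Matrix n n ℂ := matFun (fun x => if 0 < x then 1 else 0) A

/-- Positive part in the Jordan decomposition of a Hermitian matrix. -/
def posPart (A : Matrix n n ℂ) : Matrix n n ℂ := matFun (fun x => max x 0) A

/-- Projection onto the support of a Hermitian (e.g. PSD) matrix. -/
def suppProj (A : Matrix n n ℂ) : Matrix n n ℂ := matFun (fun x => if x = 0 then 0 else 1) A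

/-!
Put `H = log σ - Π/β` and `Z = Tr exp H`. The Gibbs state `ρ* = exp H / Z` satisfies
`log ρ* = H - log Z`, so on density matrices the functional equals `β S(ρ‖ρ*) - β log Z`, and
everything reduces to Klein's inequality `S(ρ‖ρ*) ≥ 0` with its equality case. Write
`ρ = ∑ pᵢ |uᵢ⟩⟨uᵢ|`, `ρ* = ∑ qⱼ |vⱼ⟩⟨vⱼ|` and `wᵢⱼ = |⟨uᵢ, vⱼ⟩|²`; the matrix `w` is doubly
stochastic, hence `∑ wᵢⱼ (pᵢ - qⱼ) = Tr ρ - Tr ρ* = 0` and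
`S(ρ‖ρ*) = ∑ wᵢⱼ qⱼ klFun (pᵢ / qⱼ) ≥ 0`. Equality forces `pᵢ = qⱼ` whenever `wᵢⱼ ≠ 0`, i.e.
`diag p · W = W · diag q` for the unitary `Wᵢⱼ = ⟨uᵢ, vⱼ⟩`, and this conjugates `ρ` into `ρ*`.
-/

open InformationTheory

section FunctionalCalculus

variable {A : Matrix n n ℂ}

lemma matFun_of_isHermitian (hA : A.IsHermitian) (f : ℝ → ℝ) :
    matFun f A = (hA.eigenvectorUnitary : Matrix n n ℂ) *
      diagonal (fun i => (f (hA.eigenvalues i) : ℂ)) *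
        star (hA.eigenvectorUnitary : Matrix n n ℂ) :=
  dif_pos hA

lemma Matrix.IsHermitian.eq_unitary_conj_diagonal (hA : A.IsHermitian) :
    A = (hA.eigenvectorUnitary : Matrix n n ℂ) * diagonal (fun i => (hA.eigenvalues i : ℂ)) *
      star (hA.eigenvectorUnitary : Matrix n n ℂ) := by
  conv_lhs => rw [hA.spectral_theorem, Unitary.conjStarAlgAut_apply]
  rfl

lemma matFun_eq_cfc (hA : A.IsHermitian) (f : ℝ → ℝ) : matFun f A = cfc f A := by
  rw [hA.cfc_eq f, matFun_of_isHermitian hA, IsHermitian.cfc, Unitary.conjStarAlgAut_apply]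
  rfl

lemma isHermitian_matFun (hA : A.IsHermitian) (f : ℝ → ℝ) : (matFun f A).IsHermitian := by
  rw [matFun_eq_cfc hA]
  exact cfc_predicate f A

lemma trace_unitary_conj (U : unitaryGroup n ℂ) (X : Matrix n n ℂ) :
    ((U : Matrix n n ℂ) * X * star (U : Matrix n n ℂ)).trace = X.trace := by
  rw [trace_mul_cycle, Unitary.coe_star_mul_self, one_mul]

lemma trace_matFun (hA : A.IsHermitian) (f : ℝ → ℝ) :
    (matFun f A).trace = ((∑ i, f (hA.eigenvalues i) : ℝ) : ℂ) := by
  rw [matFun_of_isHermitian hA, trace_unitary_conj, trace_diagonal, Complex.ofReal_sum]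

lemma posDef_matFun (hA : A.IsHermitian) {f : ℝ → ℝ} (hf : ∀ i, 0 < f (hA.eigenvalues i)) :
    (matFun f A).PosDef := by
  rw [matFun_of_isHermitian hA, Unitary.isUnit_coe.posDef_star_right_conjugate_iff,
    posDef_diagonal_iff]
  exact fun i => Complex.zero_lt_real.mpr (hf i)

lemma matFun_comp (hA : A.IsHermitian) (f g : ℝ → ℝ) :
    matFun g (matFun f A) = matFun (g ∘ f) A := by
  rw [matFun_eq_cfc (isHermitian_matFun hA f), matFun_eq_cfc hA, matFun_eq_cfc hA,
    cfc_comp g f A hA.isSelfAdjoint (Matrix.finite_real_spectrum.image f |>.continuousOn g)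
      (Matrix.finite_real_spectrum.continuousOn f)]

lemma matFun_const_mul (hA : A.IsHermitian) (c : ℝ) (f : ℝ → ℝ) :
    matFun (fun x => c * f x) A = (c : ℂ) • matFun f A := by
  rw [matFun_eq_cfc hA, matFun_eq_cfc hA,
    cfc_const_mul c f A (Matrix.finite_real_spectrum.continuousOn f), Complex.coe_smul]

lemma matFun_sub_const (hA : A.IsHermitian) (c : ℝ) :
    matFun (fun x => x - c) A = A - (c : ℂ) • 1 := by
  rw [matFun_eq_cfc hA, cfc_sub _ _ A, cfc_id' ℝ A, cfc_const c A, Algebra.algebraMap_eq_smul_one,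
    Complex.coe_smul]

lemma trace_mul_matFun (hA : A.IsHermitian) (f : ℝ → ℝ) :
    (A * matFun f A).trace = ((∑ i, hA.eigenvalues i * f (hA.eigenvalues i) : ℝ) : ℂ) := by
  rw [← trace_matFun hA (fun x => x * f x), matFun_eq_cfc hA, matFun_eq_cfc hA,
    cfc_mul _ _ A (Matrix.finite_real_spectrum.continuousOn _)
      (Matrix.finite_real_spectrum.continuousOn f), cfc_id' ℝ A]

end FunctionalCalculus

lemma normSq_mem_doublyStochastic (W : unitaryGroup n ℂ) :
    of (fun i j => Complex.normSq ((W : Matrix n n ℂ) i j)) ∈ doublyStochastic ℝ n := by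
  refine mem_doublyStochastic_iff_sum.mpr
    ⟨fun i j => Complex.normSq_nonneg _, fun i => ?_, fun j => ?_⟩
  · have h : ((W : Matrix n n ℂ) * star (W : Matrix n n ℂ)) i i = (1 : Matrix n n ℂ) i i := by
      rw [Unitary.mul_star_self_of_mem W.2]
    simp only [mul_apply, star_apply, one_apply_eq, RCLike.star_def, Complex.mul_conj] at h
    simpa using (by exact_mod_cast h : ∑ j, Complex.normSq ((W : Matrix n n ℂ) i j) = 1)
  · have h : (star (W : Matrix n n ℂ) * W) j j = (1 : Matrix n n ℂ) j j := by
      rw [Unitary.star_mul_self_of_mem W.2]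
    simp only [mul_apply, star_apply, one_apply_eq, RCLike.star_def,
      ← Complex.normSq_eq_conj_mul_self] at h
    simpa using (by exact_mod_cast h : ∑ i, Complex.normSq ((W : Matrix n n ℂ) i j) = 1)

lemma trace_unitary_conj_diagonal_mul_unitary_conj_diagonal (U V : unitaryGroup n ℂ) (p q : n → ℝ) :
    ((U : Matrix n n ℂ) * diagonal (fun i => (p i : ℂ)) * star (U : Matrix n n ℂ) *
      ((V : Matrix n n ℂ) * diagonal (fun j => (q j : ℂ)) * star (V : Matrix n n ℂ))).trace =
      ((∑ i, ∑ j, Complex.normSq (((star U * V : unitaryGroup n ℂ) : Matrix n n ℂ) i j) *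
        (p i * q j) : ℝ) : ℂ) := by
  set W := ((star U * V : unitaryGroup n ℂ) : Matrix n n ℂ)
  have hconj : (U : Matrix n n ℂ) * diagonal (fun i => (p i : ℂ)) * star (U : Matrix n n ℂ) *
      ((V : Matrix n n ℂ) * diagonal (fun j => (q j : ℂ)) * star (V : Matrix n n ℂ)) =
      U * (diagonal (fun i => (p i : ℂ)) * (W * diagonal (fun j => (q j : ℂ)) * star W)) *
        star (U : Matrix n n ℂ) := by
    simp only [W, Submonoid.coe_mul, Unitary.coe_star, star_mul, star_star, mul_assoc,
      Unitary.mul_star_self_of_mem U.2, mul_one]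
  rw [hconj, trace_unitary_conj, trace, Complex.ofReal_sum]
  refine Finset.sum_congr rfl fun i _ => ?_
  rw [diag_apply, diagonal_mul, mul_apply, Complex.ofReal_sum, Finset.mul_sum]
  refine Finset.sum_congr rfl fun j _ => ?_
  rw [mul_diagonal, star_apply, RCLike.star_def]
  push_cast
  rw [← Complex.mul_conj]
  ring

lemma unitary_conj_diagonal_eq_of_eq (U V : unitaryGroup n ℂ) {p q : n → ℂ}
    (h : ∀ i j, ((star U * V : unitaryGroup n ℂ) : Matrix n n ℂ) i j ≠ 0 → p i = q j) :
    (U : Matrix n n ℂ) * diagonal p * star (U : Matrix n n ℂ) =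
      (V : Matrix n n ℂ) * diagonal q * star (V : Matrix n n ℂ) := by
  set W := ((star U * V : unitaryGroup n ℂ) : Matrix n n ℂ)
  have hUW : (U : Matrix n n ℂ) * W = V := by
    simp [W, ← mul_assoc, Unitary.mul_star_self_of_mem U.2]
  have hWV : W * star (V : Matrix n n ℂ) = star (U : Matrix n n ℂ) := by
    simp [W, mul_assoc]
  have hpq : diagonal p * W = W * diagonal q := by
    ext i j
    rw [diagonal_mul, mul_diagonal]
    by_cases hij : W i j = 0
    · simp [hij]
    · rw [h i j hij, mul_comm]
  calc (U : Matrix n n ℂ) * diagonal p * star (U : Matrix n n ℂ)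
      = U * (diagonal p * W) * star (V : Matrix n n ℂ) := by rw [← hWV]; simp only [mul_assoc]
    _ = V * diagonal q * star (V : Matrix n n ℂ) := by rw [hpq, ← hUW]; simp only [mul_assoc]

lemma sum_sum_mul_sub_of_mem_doublyStochastic {M : Matrix n n ℝ} (hM : M ∈ doublyStochastic ℝ n)
    (x y : n → ℝ) : ∑ i, ∑ j, M i j * (x i - y j) = ∑ i, x i - ∑ j, y j := by
  simp only [mul_sub, Finset.sum_sub_distrib]
  rw [Finset.sum_comm (f := fun i j => M i j * y j)]
  simp only [← Finset.sum_mul, sum_row_of_mem_doublyStochastic hM,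
    sum_col_of_mem_doublyStochastic hM, one_mul]

lemma mul_sub_log_sub_sub_eq_mul_klFun (p : ℝ) {q : ℝ} (hq : q ≠ 0) :
    p * (Real.log p - Real.log q) - (p - q) = q * klFun (p / q) := by
  rcases eq_or_ne p 0 with rfl | hp
  · simp [klFun_zero]
  · rw [klFun_apply, Real.log_div hp hq]
    field_simp
    ring

section RelativeEntropy

variable {ρ τ : Matrix n n ℂ}

def eigenOverlap (hρ : ρ.IsHermitian) (hτ : τ.IsHermitian) : Matrix n n ℝ :=
  of fun i j => Complex.normSq
    (((star hρ.eigenvectorUnitary * hτ.eigenvectorUnitary : unitaryGroup n ℂ) : Matrix n n ℂ) i j)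

lemma eigenOverlap_mem_doublyStochastic (hρ : ρ.IsHermitian) (hτ : τ.IsHermitian) :
    eigenOverlap hρ hτ ∈ doublyStochastic ℝ n :=
  normSq_mem_doublyStochastic _

lemma qRelEnt_eq_sum (hρ : ρ.IsHermitian) (hτ : τ.IsHermitian) :
    qRelEnt ρ τ = ((∑ i, ∑ j, eigenOverlap hρ hτ i j *
      (hρ.eigenvalues i * (Real.log (hρ.eigenvalues i) - Real.log (hτ.eigenvalues j))) : ℝ) :
        ℂ) := by
  have hcross : (ρ * matLog τ).trace = ((∑ i, ∑ j, eigenOverlap hρ hτ i j *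
      (hρ.eigenvalues i * Real.log (hτ.eigenvalues j)) : ℝ) : ℂ) := by
    rw [matLog, matFun_of_isHermitian hτ]
    conv_lhs => rw [hρ.eq_unitary_conj_diagonal]
    exact trace_unitary_conj_diagonal_mul_unitary_conj_diagonal _ _ _ _
  rw [qRelEnt, mul_sub, trace_sub, matLog, trace_mul_matFun hρ, hcross, ← Complex.ofReal_sub]
  congr 1
  simp only [mul_sub, Finset.sum_sub_distrib]
  congr 1
  refine Finset.sum_congr rfl fun i _ => ?_
  rw [← Finset.sum_mul, sum_row_of_mem_doublyStochastic (eigenOverlap_mem_doublyStochastic hρ hτ),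
    one_mul]

lemma qRelEnt_eq_sum_klFun (hρ : ρ.IsHermitian) (hτ : τ.PosDef) (htr : ρ.trace = τ.trace) :
    qRelEnt ρ τ = ((∑ i, ∑ j, eigenOverlap hρ hτ.1 i j *
      (hτ.1.eigenvalues j * klFun (hρ.eigenvalues i / hτ.1.eigenvalues j)) : ℝ) :
        ℂ) := by
  have hsum : ∑ i, hρ.eigenvalues i = ∑ j, hτ.1.eigenvalues j := by
    exact_mod_cast hρ.trace_eq_sum_eigenvalues.symm.trans (htr.trans hτ.1.trace_eq_sum_eigenvalues)
  have hbalance : ∑ i, ∑ j, eigenOverlap hρ hτ.1 i j *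
      (hρ.eigenvalues i - hτ.1.eigenvalues j) = 0 := by
    rw [sum_sum_mul_sub_of_mem_doublyStochastic (eigenOverlap_mem_doublyStochastic _ _), hsum,
      sub_self]
  rw [qRelEnt_eq_sum hρ hτ.1, ← sub_zero (∑ i, ∑ j, _), ← hbalance]
  simp only [← Finset.sum_sub_distrib, ← mul_sub,
    mul_sub_log_sub_sub_eq_mul_klFun _ (hτ.eigenvalues_pos _).ne']

lemma eigenOverlap_mul_klFun_nonneg (hρ : ρ.PosSemidef) (hτ : τ.PosDef) (i j : n) :
    0 ≤ eigenOverlap hρ.1 hτ.1 i j *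
      (hτ.1.eigenvalues j * klFun (hρ.1.eigenvalues i / hτ.1.eigenvalues j)) :=
  mul_nonneg (nonneg_of_mem_doublyStochastic (eigenOverlap_mem_doublyStochastic _ _))
    (mul_nonneg (hτ.eigenvalues_pos j).le (klFun_nonneg
      (div_nonneg (hρ.eigenvalues_nonneg i) (hτ.eigenvalues_pos j).le)))

lemma qRelEnt_nonneg (hρ : ρ.PosSemidef) (hτ : τ.PosDef) (htr : ρ.trace = τ.trace) :
    0 ≤ qRelEnt ρ τ := by
  rw [qRelEnt_eq_sum_klFun hρ.1 hτ htr, Complex.zero_le_real]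
  exact Finset.sum_nonneg fun i _ => Finset.sum_nonneg fun j _ =>
    eigenOverlap_mul_klFun_nonneg hρ hτ i j

lemma eq_of_qRelEnt_eq_zero (hρ : ρ.PosSemidef) (hτ : τ.PosDef) (htr : ρ.trace = τ.trace)
    (h : qRelEnt ρ τ = 0) : ρ = τ := by
  have hterm := eigenOverlap_mul_klFun_nonneg hρ hτ
  rw [qRelEnt_eq_sum_klFun hρ.1 hτ htr, Complex.ofReal_eq_zero,
    Finset.sum_eq_zero_iff_of_nonneg fun i _ => Finset.sum_nonneg fun j _ => hterm i j] at h
  have hmatch : ∀ i j,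
      ((star hρ.1.eigenvectorUnitary * hτ.1.eigenvectorUnitary : unitaryGroup n ℂ) :
        Matrix n n ℂ) i j ≠ 0 → (hρ.1.eigenvalues i : ℂ) = hτ.1.eigenvalues j := by
    intro i j hij
    have hzero := (Finset.sum_eq_zero_iff_of_nonneg fun j _ => hterm i j).mp
      (h i (Finset.mem_univ i)) j (Finset.mem_univ j)
    rw [eigenOverlap, of_apply, mul_eq_zero, mul_eq_zero,
      klFun_eq_zero_iff
        (div_nonneg (hρ.eigenvalues_nonneg i) (hτ.eigenvalues_pos j).le),
      div_eq_one_iff_eq (hτ.eigenvalues_pos j).ne'] at hzero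
    rcases hzero with hW | hq | hpq
    · exact absurd (Complex.normSq_eq_zero.mp hW) hij
    · exact absurd hq (hτ.eigenvalues_pos j).ne'
    · exact congrArg _ hpq
  rw [hρ.1.eq_unitary_conj_diagonal, hτ.1.eq_unitary_conj_diagonal]
  exact unitary_conj_diagonal_eq_of_eq _ _ hmatch

end RelativeEntropy

omit [DecidableEq n] in
lemma IsDensity.nonempty {ρ : Matrix n n ℂ} (hρ : IsDensity ρ) : Nonempty n := by
  by_contra h
  rw [not_nonempty_iff] at h
  simpa [trace] using hρ.2

lemma qRelEnt_self (ρ : Matrix n n ℂ) : qRelEnt ρ ρ = 0 := by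
  simp [qRelEnt]

def gibbsState (H : Matrix n n ℂ) : Matrix n n ℂ := ((matExp H).trace)⁻¹ • matExp H

section GibbsState

variable {H : Matrix n n ℂ}

lemma gibbsState_eq_matFun (hH : H.IsHermitian) :
    gibbsState H = matFun (fun x => (∑ i, Real.exp (hH.eigenvalues i))⁻¹ * Real.exp x) H := by
  rw [matFun_const_mul hH, gibbsState, matExp, trace_matFun hH, Complex.ofReal_inv]

lemma posDef_gibbsState (hH : H.IsHermitian) : (gibbsState H).PosDef := by
  rw [gibbsState_eq_matFun hH]
  exact posDef_matFun hH fun i => mul_pos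
    (inv_pos.mpr (Finset.sum_pos (fun j _ => Real.exp_pos _) ⟨i, Finset.mem_univ i⟩))
    (Real.exp_pos _)

lemma isDensity_gibbsState [Nonempty n] (hH : H.IsHermitian) : IsDensity (gibbsState H) := by
  refine ⟨(posDef_gibbsState hH).posSemidef, ?_⟩
  have hZ : (∑ i, Real.exp (hH.eigenvalues i) : ℂ) ≠ 0 := by
    exact_mod_cast (Finset.sum_pos (fun j _ => Real.exp_pos _) Finset.univ_nonempty).ne'
  rw [gibbsState, trace_smul, matExp, trace_matFun hH, smul_eq_mul, Complex.ofReal_sum,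
    inv_mul_cancel₀ hZ]

lemma matLog_gibbsState [Nonempty n] (hH : H.IsHermitian) :
    matLog (gibbsState H) = H - (Real.log (∑ i, Real.exp (hH.eigenvalues i)) : ℂ) • 1 := by
  have hZ : 0 < ∑ i, Real.exp (hH.eigenvalues i) :=
    Finset.sum_pos (fun j _ => Real.exp_pos _) Finset.univ_nonempty
  have hlog : Real.log ∘ (fun x => (∑ i, Real.exp (hH.eigenvalues i))⁻¹ * Real.exp x) =
      fun x => x - Real.log (∑ i, Real.exp (hH.eigenvalues i)) := by
    ext x
    rw [Function.comp_apply, Real.log_mul (inv_ne_zero hZ.ne') (Real.exp_ne_zero x), Real.log_inv,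
      Real.log_exp, neg_add_eq_sub]
  rw [gibbsState_eq_matFun hH, matLog, matFun_comp hH, hlog, matFun_sub_const hH]

end GibbsState

lemma trace_mul_add_mul_qRelEnt_eq {σ Pm : Matrix n n ℂ} {β : ℝ} (hβ : β ≠ 0)
    (hH : (matLog σ - (β : ℂ)⁻¹ • Pm).IsHermitian) [Nonempty n] {ρ : Matrix n n ℂ}
    (hρ : ρ.trace = 1) :
    (Pm * ρ).trace + β * qRelEnt ρ σ =
      β * qRelEnt ρ (gibbsState (matLog σ - (β : ℂ)⁻¹ • Pm)) -
        β * Real.log (∑ i, Real.exp (hH.eigenvalues i)) := by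
  have hβ' : (β : ℂ) ≠ 0 := Complex.ofReal_ne_zero.mpr hβ
  rw [qRelEnt, qRelEnt, matLog_gibbsState hH]
  simp only [mul_sub, Matrix.mul_smul, trace_sub, trace_smul, Matrix.mul_one, hρ, smul_eq_mul,
    trace_mul_comm Pm]
  field_simp
  ring

theorem stmt3_general (σ Pm : Matrix n n ℂ) (hσ : IsDensity σ)
    (hPm : Pm.PosSemidef) (β : ℝ) (hβ : 0 < β) :
    let ρstar : Matrix n n ℂ :=
      ((matExp (matLog σ - (β : ℂ)⁻¹ • Pm)).trace)⁻¹ • matExp (matLog σ - (β : ℂ)⁻¹ • Pm)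
    let F : Matrix n n ℂ → ℂ := fun ρ => (Pm * ρ).trace + (β : ℂ) * qRelEnt ρ σ
    IsDensity ρstar ∧
    (∀ ρ, IsDensity ρ → F ρstar ≤ F ρ) ∧
    (∀ ρ, IsDensity ρ → F ρ = F ρstar → ρ = ρstar) := by
  intro ρstar F
  have := hσ.nonempty
  have hH : (matLog σ - (β : ℂ)⁻¹ • Pm).IsHermitian :=
    (isHermitian_matFun hσ.1.1 _).sub (hPm.1.smul (by simp [IsSelfAdjoint]))
  have hstar : IsDensity ρstar := isDensity_gibbsState hH
  have hpd : ρstar.PosDef := posDef_gibbsState hH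
  have hF (ρ : Matrix n n ℂ) (hρ : IsDensity ρ) :
      F ρ = β * qRelEnt ρ ρstar - β * Real.log (∑ i, Real.exp (hH.eigenvalues i)) :=
    trace_mul_add_mul_qRelEnt_eq hβ.ne' hH hρ.2
  refine ⟨hstar, fun ρ hρ => ?_, fun ρ hρ hFρ => ?_⟩
  · rw [hF ρ hρ, hF ρstar hstar, qRelEnt_self, mul_zero, sub_le_sub_iff_right]
    exact mul_nonneg (by exact_mod_cast hβ.le) (qRelEnt_nonneg hρ.1 hpd (hρ.2.trans hstar.2.symm))
  · refine eq_of_qRelEnt_eq_zero hρ.1 hpd (hρ.2.trans hstar.2.symm) ?_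
    rw [hF ρ hρ, hF ρstar hstar, qRelEnt_self, mul_zero, sub_left_inj, mul_eq_zero] at hFρ
    exact hFρ.resolve_left (Complex.ofReal_ne_zero.mpr hβ.ne')

/-- Attacker's optimal strategy (Proposition 1): the unique minimizer over density
matrices of `Tr(Πρ) + β S(ρ‖σ)` is `exp(log σ − Π/β)/Tr exp(log σ − Π/β)`. -/
theorem stmt3 (σ Pm : Matrix n n ℂ) (hσ : IsDensity σ) (hσpd : σ.PosDef)
    (hPm : Pm.PosSemidef) (β : ℝ) (hβ : 0 < β) :
    let ρstar : Matrix n n ℂ :=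
      ((matExp (matLog σ - (β : ℂ)⁻¹ • Pm)).trace)⁻¹ • matExp (matLog σ - (β : ℂ)⁻¹ • Pm)
    let F : Matrix n n ℂ → ℂ := fun ρ => (Pm * ρ).trace + (β : ℂ) * qRelEnt ρ σ
    IsDensity ρstar ∧
    (∀ ρ, IsDensity ρ → F ρstar ≤ F ρ) ∧
    (∀ ρ, IsDensity ρ → F ρ = F ρstar → ρ = ρstar) :=
  stmt3_general σ Pm hσ hPm β hβ
end
end

section
/- (Helstrom optimal measurement) Let ρ₀, ρ₁ be density matrices on a finite-dimensional Hilbert space and τ > 0. Define Π* as the orthogonal projection onto the span of eigenvectors of ρ₁ − τρ₀ with strictly positive eigenvalues. Then for every operator Π with 0 ≤ Π ≤ 1, one has τ·Tr(Πρ₀) − Tr(Πρ₁) ≥ τ·Tr(Π*ρ₀) − Tr(Π*ρ₁); equivalently Π* minimizes the Bayes risk Tr((1−Π)ρ₁) + τ·Tr(Πρ₀). -/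
open Matrix ComplexOrder Kronecker
noncomputable section
variable {m n : Type*} [Fintype n] [DecidableEq n] [Fintype m] [DecidableEq m]

/-!
Write `A = ρ₁ − τρ₀ = U diag(λ) U*`. Both objectives are affine in `-Tr(Π A)`, and
`Tr(Π A) = ∑ᵢ qᵢ λᵢ` with `qᵢ = (U* Π U)ᵢᵢ ∈ [0, 1]`. The sum is maximised termwise by
`qᵢ = 1` for `λᵢ > 0` and `qᵢ = 0` otherwise, which is exactly `Π* = U diag(1_{λ > 0}) U*`.
-/

theorem Matrix.trace_mul_mul_diagonal_mul {ι R : Type*} [Fintype ι] [DecidableEq ι]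
    [CommSemiring R] (P U V : Matrix ι ι R) (d : ι → R) :
    (P * (U * diagonal d * V)).trace = ∑ i, (V * P * U) i i * d i := by
  rw [← Matrix.mul_assoc, Matrix.trace_mul_comm, ← Matrix.mul_assoc, ← Matrix.mul_assoc]
  simp [Matrix.trace, Matrix.mul_diagonal]

namespace Matrix.PosSemidef

variable {ι R : Type*} [DecidableEq ι] [Ring R] [PartialOrder R] [StarRing R]

theorem diag_le_one_of_one_sub [StarOrderedRing R] {P : Matrix ι ι R}
    (hP1 : (1 - P).PosSemidef) (i : ι) : P i i ≤ 1 := by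
  simpa [sub_apply] using sub_nonneg.mp (hP1.diag_nonneg (i := i))

theorem star_mul_mul_unitary [Fintype ι] {P : Matrix ι ι R} (hP : P.PosSemidef)
    (U : unitary (Matrix ι ι R)) : (star (U : Matrix ι ι R) * P * U).PosSemidef := by
  simpa [star_eq_conjTranspose] using hP.conjTranspose_mul_mul_same (U : Matrix ι ι R)

theorem one_sub_star_mul_mul_unitary [Fintype ι] {P : Matrix ι ι R} (hP1 : (1 - P).PosSemidef)
    (U : unitary (Matrix ι ι R)) : (1 - star (U : Matrix ι ι R) * P * U).PosSemidef := by
  simpa [Matrix.mul_sub, Matrix.sub_mul] using hP1.star_mul_mul_unitary U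

end Matrix.PosSemidef

theorem Complex.mul_le_indicator_pos_mul {q : ℂ} (hq₀ : 0 ≤ q) (hq₁ : q ≤ 1) (x : ℝ) :
    q * x ≤ ((if 0 < x then 1 else 0 : ℝ) : ℂ) * x := by
  split_ifs with hx
  · simpa using mul_le_mul_of_nonneg_right hq₁ (Complex.zero_le_real.mpr hx.le)
  · simpa using mul_nonpos_of_nonneg_of_nonpos hq₀ (by exact_mod_cast not_lt.mp hx)

theorem Matrix.IsHermitian.eq_eigenvectorUnitary_mul_diagonal {A : Matrix n n ℂ}
    (hA : A.IsHermitian) : A = (hA.eigenvectorUnitary : Matrix n n ℂ) *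
      diagonal (fun i => (hA.eigenvalues i : ℂ)) * star (hA.eigenvectorUnitary : Matrix n n ℂ) :=
  hA.spectral_theorem

theorem trace_mul_le_trace_posProj_mul {A P : Matrix n n ℂ} (hA : A.IsHermitian)
    (hP : P.PosSemidef) (hP1 : (1 - P).PosSemidef) :
    (P * A).trace ≤ (posProj A * A).trace := by
  set U := hA.eigenvectorUnitary
  have hUU : star (U : Matrix n n ℂ) * U = 1 := Unitary.coe_star_mul_self U
  have hproj : star (U : Matrix n n ℂ) * posProj A * U =
      diagonal (fun i => ((if 0 < hA.eigenvalues i then 1 else 0 : ℝ) : ℂ)) := by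
    rw [posProj, matFun, dif_pos hA]
    simp only [Matrix.mul_assoc]
    rw [hUU, Matrix.mul_one, ← Matrix.mul_assoc, hUU, Matrix.one_mul]
  rw [hA.eq_eigenvectorUnitary_mul_diagonal, trace_mul_mul_diagonal_mul,
    trace_mul_mul_diagonal_mul, ← hA.eq_eigenvectorUnitary_mul_diagonal, hproj]
  refine Finset.sum_le_sum fun i _ => ?_
  simpa using Complex.mul_le_indicator_pos_mul ((hP.star_mul_mul_unitary U).diag_nonneg)
    ((hP1.one_sub_star_mul_mul_unitary U).diag_le_one_of_one_sub i) (hA.eigenvalues i)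

theorem stmt5_general (ρ₀ ρ₁ : Matrix n n ℂ) (h₀ : IsDensity ρ₀) (h₁ : IsDensity ρ₁)
    (τ : ℝ) (Pm : Matrix n n ℂ)
    (hPm : Pm.PosSemidef) (hPm1 : ((1 : Matrix n n ℂ) - Pm).PosSemidef) :
    let Pstar : Matrix n n ℂ := posProj (ρ₁ - (τ : ℂ) • ρ₀)
    (τ : ℂ) * (Pstar * ρ₀).trace - (Pstar * ρ₁).trace ≤
      (τ : ℂ) * (Pm * ρ₀).trace - (Pm * ρ₁).trace ∧
    (((1 : Matrix n n ℂ) - Pstar) * ρ₁).trace + (τ : ℂ) * (Pstar * ρ₀).trace ≤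
      (((1 : Matrix n n ℂ) - Pm) * ρ₁).trace + (τ : ℂ) * (Pm * ρ₀).trace := by
  intro Pstar
  have hA : (ρ₁ - (τ : ℂ) • ρ₀).IsHermitian :=
    h₁.1.isHermitian.sub (h₀.1.isHermitian.smul (Complex.conj_ofReal τ))
  have hopt := trace_mul_le_trace_posProj_mul hA hPm hPm1
  have gap (P : Matrix n n ℂ) : (τ : ℂ) * (P * ρ₀).trace - (P * ρ₁).trace =
      -(P * (ρ₁ - (τ : ℂ) • ρ₀)).trace := by
    simp only [Matrix.mul_sub, Matrix.mul_smul, trace_sub, trace_smul, smul_eq_mul]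
    ring
  have risk (P : Matrix n n ℂ) : ((1 - P) * ρ₁).trace + (τ : ℂ) * (P * ρ₀).trace =
      ρ₁.trace - (P * (ρ₁ - (τ : ℂ) • ρ₀)).trace := by
    rw [sub_eq_add_neg ρ₁.trace, ← gap, Matrix.sub_mul, trace_sub, Matrix.one_mul]
    ring
  rw [gap, gap, risk, risk]
  exact ⟨neg_le_neg hopt, sub_le_sub_left hopt _⟩

/-- Helstrom's optimal measurement: the projection onto the positive eigenspace of
`ρ₁ − τρ₀` minimizes the Bayes risk among all `0 ≤ Π ≤ 1`. -/
theorem stmt5 (ρ₀ ρ₁ : Matrix n n ℂ) (h₀ : IsDensity ρ₀) (h₁ : IsDensity ρ₁)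
    (τ : ℝ) (hτ : 0 < τ) (Pm : Matrix n n ℂ)
    (hPm : Pm.PosSemidef) (hPm1 : ((1 : Matrix n n ℂ) - Pm).PosSemidef) :
    let Pstar : Matrix n n ℂ := posProj (ρ₁ - (τ : ℂ) • ρ₀)
    (τ : ℂ) * (Pstar * ρ₀).trace - (Pstar * ρ₁).trace ≤
      (τ : ℂ) * (Pm * ρ₀).trace - (Pm * ρ₁).trace ∧
    (((1 : Matrix n n ℂ) - Pstar) * ρ₁).trace + (τ : ℂ) * (Pstar * ρ₀).trace ≤
      (((1 : Matrix n n ℂ) - Pm) * ρ₁).trace + (τ : ℂ) * (Pm * ρ₀).trace :=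
  stmt5_general ρ₀ ρ₁ h₀ h₁ τ Pm hPm hPm1
end
end
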